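/- Let ν ≥ 1, ρ > 0, |ω| = 1, let J be the ν×ν upper-triangular Jordan block with diagonal entries ρω and superdiagonal entries 1, and let V be a d×ν complex matrix with QV = VJ. Suppose 𝔽 : ℝ → Matrix (Fin d) (Fin ν) ℂ is continuous, 𝔽(x) = 0 for x ≤ 0, 𝔽(x) = V for x ≥ 1, and 𝔽(x)·J = Σ_{r<x_1} A_r V + A_{x_1} 𝔽(Bx − x_1) for every x ∈ [0,1), where x_1 = ⌊Bx⌋. Then the function 𝔸 : [0,∞) → Matrix (Fin d) (Fin ν) ℂ defined by 𝔸(t) = (I_d − A_0) Σ_{k=0}^{⌊t⌋} Q^k V + 𝔽(B^{{t}−1}) J^{⌊t⌋+1} (where {t} = t − ⌊t⌋) is continuous on [0,∞); in particular its one-sided limits at every integer agree. Moreover, if 𝔽 restricted to [0,1] is Hölder with exponent β ∈ (0,1], then 𝔸 is Hölder with exponent β on every bounded interval [0,M]. -/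
import Mathlib


open scoped Classical BigOperators
open Filter Asymptotics

attribute [local instance] Matrix.linftyOpNormedAddCommGroup Matrix.linftyOpNormedRing

set_option maxHeartbeats 1000000

noncomputable section

/-- `A_w = A_{w_1} ⋯ A_{w_K}` for a word `w` of length `K` over the digit alphabet. -/
def wordProd {B d : ℕ} (A : Fin B → Matrix (Fin d) (Fin d) ℂ) {K : ℕ}
    (w : Fin K → Fin B) : Matrix (Fin d) (Fin d) ℂ :=
  ((List.ofFn w).map A).prod

/-- `(0.w)_B = Σ_{k=1}^K w_k B^{-k}`. -/
def wordVal {B K : ℕ} (w : Fin K → Fin B) : ℝ :=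
  ∑ k : Fin K, (w k : ℝ) / (B : ℝ) ^ ((k : ℕ) + 1)

/-- The running sum `S_K(x) = Σ_{|w|=K, (0.w)_B ≤ x} A_w C`. -/
def runSum {B d : ℕ} (A : Fin B → Matrix (Fin d) (Fin d) ℂ) (C : Fin d → ℂ)
    (K : ℕ) (x : ℝ) : Fin d → ℂ :=
  ∑ w : Fin K → Fin B, if wordVal w ≤ x then (wordProd A w).mulVec C else 0

/-- The basic dilation equation for data `ρ, ω, V`. -/
def DilationEq {B d : ℕ} (A : Fin B → Matrix (Fin d) (Fin d) ℂ) (ρ : ℝ) (ω : ℂ)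
    (V : Fin d → ℂ) (Φ : ℝ → Fin d → ℂ) : Prop :=
  Φ 0 = 0 ∧ Φ 1 = V ∧
    ∀ r : Fin B, ∀ x : ℝ, (r : ℝ) / B ≤ x → x < ((r : ℝ) + 1) / B →
      Φ x = ((ρ : ℂ) * ω)⁻¹ •
        ((∑ s ∈ Finset.univ.filter fun s : Fin B => s < r, (A s).mulVec V) +
          (A r).mulVec (Φ (B * x - r)))

/-- Lipschitz bound for `b ^ ·` on nonpositive exponents. -/
lemma myRpowLip {b : ℝ} (hb : 1 ≤ b) {s t : ℝ} (hs : s ≤ 0) (ht : t ≤ 0) :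
    |b ^ t - b ^ s| ≤ Real.log b * |t - s| := by
  have hb0 : (0 : ℝ) < b := lt_of_lt_of_le one_pos hb
  have hlog : 0 ≤ Real.log b := Real.log_nonneg hb
  have key : ∀ u v : ℝ, u ≤ v → v ≤ 0 → b ^ v - b ^ u ≤ Real.log b * (v - u) := by
    intro u v huv hv
    rw [Real.rpow_def_of_pos hb0, Real.rpow_def_of_pos hb0]
    set L := Real.log b
    have h1 : L * u - L * v + 1 ≤ Real.exp (L * u - L * v) := Real.add_one_le_exp _
    have h2 : Real.exp (L * u - L * v) = Real.exp (L * u) / Real.exp (L * v) :=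
      Real.exp_sub _ _
    have h3 : Real.exp (L * v) ≤ 1 := by
      rw [Real.exp_le_one_iff]
      exact mul_nonpos_of_nonneg_of_nonpos hlog hv
    have h4 : 0 < Real.exp (L * v) := Real.exp_pos _
    rw [h2] at h1
    have h5 : (L * u - L * v + 1) * Real.exp (L * v) ≤ Real.exp (L * u) := by
      exact (le_div_iff₀ h4).mp h1
    nlinarith [Real.exp_pos (L * u), mul_nonneg hlog (sub_nonneg.mpr huv)]
  rcases le_total s t with h | h
  · rw [abs_of_nonneg (by
      have := Real.rpow_le_rpow_of_exponent_le hb h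
      linarith), abs_of_nonneg (by linarith)]
    exact key s t h ht
  · rw [abs_of_nonpos (by
      have := Real.rpow_le_rpow_of_exponent_le hb h
      linarith), abs_of_nonpos (by linarith), neg_sub, neg_sub]
    exact key t s h hs

/-- the function `𝔸(t) = (I - A_0) Σ_{k=0}^{⌊t⌋} Q^k V + 𝔽(B^{{t}-1}) J^{⌊t⌋+1}`
built from a matrix solution `𝔽` of the dilation equation is continuous on `[0,∞)`, and it
is Hölder on bounded intervals as soon as `𝔽` is Hölder on `[0,1]`. -/
theorem expansion_coefficient_continuous (B d ν : ℕ) (hB : 2 ≤ B) (hd : 1 ≤ d)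
    (hν : 1 ≤ ν)
    (A : Fin B → Matrix (Fin d) (Fin d) ℂ)
    (ρ : ℝ) (hρ : 0 < ρ) (ω : ℂ) (hω : ‖ω‖ = 1)
    (J : Matrix (Fin ν) (Fin ν) ℂ)
    (hJ : J = Matrix.of fun i j : Fin ν =>
      if j = i then (ρ : ℂ) * ω else if (j : ℕ) = (i : ℕ) + 1 then 1 else 0)
    (V : Matrix (Fin d) (Fin ν) ℂ) (hQV : (∑ r, A r) * V = V * J)
    (F : ℝ → Matrix (Fin d) (Fin ν) ℂ)
    (hFcont : Continuous F)
    (hF0 : ∀ x : ℝ, x ≤ 0 → F x = 0)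
    (hF1 : ∀ x : ℝ, 1 ≤ x → F x = V)
    (hFde : ∀ x : ℝ, 0 ≤ x → x < 1 → ∀ x₁ : Fin B,
      (x₁ : ℝ) ≤ B * x → B * x < (x₁ : ℝ) + 1 →
      F x * J = (∑ r ∈ Finset.univ.filter fun r : Fin B => r < x₁, A r * V) +
        A x₁ * F (B * x - (x₁ : ℝ)))
    (𝔸 : ℝ → Matrix (Fin d) (Fin ν) ℂ)
    (h𝔸 : ∀ t : ℝ, 0 ≤ t → 𝔸 t =
      ((1 : Matrix (Fin d) (Fin d) ℂ) - A ⟨0, by omega⟩) *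
          (∑ k ∈ Finset.range (⌊t⌋₊ + 1), (∑ r, A r) ^ k * V) +
        F ((B : ℝ) ^ (Int.fract t - 1)) * J ^ (⌊t⌋₊ + 1)) :
    ContinuousOn 𝔸 (Set.Ici 0) ∧
      ∀ β : ℝ, 0 < β → β ≤ 1 →
        (∃ c : ℝ, 0 ≤ c ∧ ∀ x ∈ Set.Icc (0:ℝ) 1, ∀ y ∈ Set.Icc (0:ℝ) 1,
          ‖F y - F x‖ ≤ c * |y - x| ^ β) →
        ∀ M : ℝ, 0 ≤ M → ∃ c : ℝ, 0 ≤ c ∧ ∀ x ∈ Set.Icc (0:ℝ) M, ∀ y ∈ Set.Icc (0:ℝ) M,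
          ‖𝔸 y - 𝔸 x‖ ≤ c * |y - x| ^ β := by
  have hB2 : (2 : ℝ) ≤ (B : ℝ) := by exact_mod_cast hB
  have hB1 : (1 : ℝ) < (B : ℝ) := by linarith
  have hB0 : (0 : ℝ) < (B : ℝ) := by linarith
  set A0 : Matrix (Fin d) (Fin d) ℂ := A ⟨0, by omega⟩ with hA0
  set Q : Matrix (Fin d) (Fin d) ℂ := ∑ r, A r with hQdef
  -- powers intertwine
  have hpow : ∀ n : ℕ, Q ^ n * V = V * J ^ n := by
    intro n
    induction n with
    | zero => simp
    | succ n ih =>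
      rw [pow_succ', pow_succ', Matrix.mul_assoc, ih, ← Matrix.mul_assoc, hQV, Matrix.mul_assoc]
  -- value of F(1/B) * J
  have hF1B : F ((B : ℝ)⁻¹) * J = A0 * V := by
    have h0 : (0 : ℝ) ≤ (B : ℝ)⁻¹ := by positivity
    have h1 : (B : ℝ)⁻¹ < 1 := by
      rw [inv_lt_one_iff₀]; right; exact hB1
    have hmul : (B : ℝ) * (B : ℝ)⁻¹ = 1 := mul_inv_cancel₀ (ne_of_gt hB0)
    have hval : (((⟨1, by omega⟩ : Fin B) : ℕ) : ℝ) = 1 := by norm_num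
    have hde := hFde ((B : ℝ)⁻¹) h0 h1 ⟨1, by omega⟩
      (by rw [hmul, hval]) (by rw [hmul, hval]; norm_num)
    rw [hmul, hval] at hde
    have hFz : F (1 - 1) = 0 := hF0 _ (by norm_num)
    rw [hFz, Matrix.mul_zero, add_zero] at hde
    rw [hde]
    have hset : (Finset.univ.filter fun r : Fin B => r < ⟨1, by omega⟩) =
        {(⟨0, by omega⟩ : Fin B)} := by
      ext r
      simp only [Finset.mem_filter, Finset.mem_univ, true_and, Finset.mem_singleton,
        Fin.lt_def, Fin.ext_iff]
      omega
    rw [hset, Finset.sum_singleton]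
  -- the key "agree" lemma: formula for 𝔸 on [n, n+1]
  have hagree : ∀ n : ℕ, ∀ t : ℝ, (n : ℝ) ≤ t → t ≤ (n : ℝ) + 1 →
      𝔸 t = (1 - A0) * (∑ k ∈ Finset.range (n + 1), Q ^ k * V) +
        F ((B : ℝ) ^ (t - (n : ℝ) - 1)) * J ^ (n + 1) := by
    intro n t hnt htn
    have ht0 : 0 ≤ t := le_trans (Nat.cast_nonneg n) hnt
    rcases lt_or_eq_of_le htn with hlt | heq
    · have hfl : ⌊t⌋₊ = n := (Nat.floor_eq_iff ht0).mpr ⟨hnt, by push_cast; linarith⟩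
      have hfi : ⌊t⌋ = (n : ℤ) := Int.floor_eq_iff.mpr ⟨by push_cast; linarith,
        by push_cast; linarith⟩
      have hfr : Int.fract t = t - (n : ℝ) := by
        rw [← Int.self_sub_floor, hfi]; push_cast; ring
      rw [h𝔸 t ht0, hfl, hfr]
    · have hteq : t = ((n + 1 : ℕ) : ℝ) := by push_cast; linarith
      subst hteq
      have h1 : ⌊((n + 1 : ℕ) : ℝ)⌋₊ = n + 1 := Nat.floor_natCast _
      have h2 : Int.fract ((n + 1 : ℕ) : ℝ) = 0 := Int.fract_natCast _
      rw [h𝔸 _ (by positivity), h1, h2]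
      have e2 : (B : ℝ) ^ ((0 : ℝ) - 1) = (B : ℝ)⁻¹ := by
        norm_num [Real.rpow_neg_one]
      have e3 : ((n + 1 : ℕ) : ℝ) - (n : ℝ) - 1 = 0 := by push_cast; ring
      rw [e2, e3, Real.rpow_zero, hF1 1 le_rfl]
      have hJp : F ((B : ℝ)⁻¹) * J ^ (n + 1 + 1) = A0 * V * J ^ (n + 1) := by
        rw [pow_succ', ← Matrix.mul_assoc, hF1B]
      rw [hJp, Finset.sum_range_succ, Matrix.mul_add, hpow (n + 1),
        Matrix.mul_assoc A0 V (J ^ (n + 1)),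
        Matrix.sub_mul (1 : Matrix (Fin d) (Fin d) ℂ) A0 (V * J ^ (n + 1)), Matrix.one_mul]
      abel
  -- continuity of the model on each interval
  have hGcont : ∀ n : ℕ, Continuous fun t : ℝ =>
      (1 - A0) * (∑ k ∈ Finset.range (n + 1), Q ^ k * V) +
        F ((B : ℝ) ^ (t - (n : ℝ) - 1)) * J ^ (n + 1) := by
    intro n
    have hrp : Continuous fun t : ℝ => (B : ℝ) ^ (t - (n : ℝ) - 1) := by
      have : ∀ t : ℝ, (B : ℝ) ^ (t - (n : ℝ) - 1) =
          Real.exp (Real.log B * (t - (n : ℝ) - 1)) := fun t =>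
        Real.rpow_def_of_pos hB0 _
      simp only [this]
      exact Real.continuous_exp.comp (by fun_prop)
    exact continuous_const.add ((hFcont.comp hrp).matrix_mul continuous_const)
  have contIcc : ∀ n : ℕ, ContinuousOn 𝔸 (Set.Icc (n : ℝ) ((n : ℝ) + 1)) := by
    intro n
    exact (hGcont n).continuousOn.congr fun t ht => hagree n t ht.1 ht.2
  have contIci : ContinuousOn 𝔸 (Set.Ici 0) := by
    intro t ht
    obtain ⟨n, h1, h2⟩ : ∃ n : ℕ, (n : ℝ) ≤ t ∧ t < (n : ℝ) + 1 :=
      ⟨⌊t⌋₊, Nat.floor_le ht, Nat.lt_floor_add_one t⟩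
    have cw1 : ContinuousWithinAt 𝔸 (Set.Icc (n : ℝ) ((n : ℝ) + 1)) t :=
      (contIcc n) t ⟨h1, le_of_lt h2⟩
    rcases eq_or_lt_of_le h1 with heq | hlt
    · rcases Nat.eq_zero_or_pos n with h0 | hpos
      · apply cw1.mono_of_mem_nhdsWithin
        refine Filter.mem_of_superset
          (Filter.inter_mem self_mem_nhdsWithin
            (mem_nhdsWithin_of_mem_nhds (Iio_mem_nhds h2))) ?_
        intro y hy
        rw [h0] at *
        exact ⟨by simpa using hy.1, le_of_lt hy.2⟩
      · obtain ⟨m, rfl⟩ : ∃ m, n = m + 1 := ⟨n - 1, by omega⟩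
        have cw2 : ContinuousWithinAt 𝔸 (Set.Icc (m : ℝ) ((m : ℝ) + 1)) t :=
          (contIcc m) t ⟨by push_cast at heq ⊢; linarith, by push_cast at heq ⊢; linarith⟩
        apply (cw2.union cw1).mono_of_mem_nhdsWithin
        refine mem_nhdsWithin_of_mem_nhds ?_
        refine Filter.mem_of_superset (Ioo_mem_nhds (a := (m : ℝ)) (b := ((m + 1 : ℕ) : ℝ) + 1)
          (by push_cast at heq ⊢; linarith) h2) ?_
        intro y hy
        rcases le_total y ((m : ℝ) + 1) with h | h
        · exact Or.inl ⟨le_of_lt hy.1, h⟩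
        · exact Or.inr ⟨by push_cast at h ⊢; linarith, le_of_lt hy.2⟩
    · exact cw1.mono_of_mem_nhdsWithin (mem_nhdsWithin_of_mem_nhds (Icc_mem_nhds hlt h2))
  refine ⟨contIci, ?_⟩
  rintro β hβ0 hβ1 ⟨c, hc, hH⟩ M hM
  set N := ⌊M⌋₊ with hN
  set CJ : ℝ := max 1 ‖J‖ ^ (N + 1) with hCJ
  have hCJ0 : (0 : ℝ) ≤ CJ := le_trans zero_le_one (one_le_pow₀ (le_max_left _ _))
  have hJn : ∀ n : ℕ, n ≤ N → ‖J ^ (n + 1)‖ ≤ CJ := by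
    intro n hn
    calc ‖J ^ (n + 1)‖ ≤ ‖J‖ ^ (n + 1) := norm_pow_le' J n.succ_pos
    _ ≤ max 1 ‖J‖ ^ (n + 1) := pow_le_pow_left₀ (norm_nonneg _) (le_max_right _ _) _
    _ ≤ CJ := pow_le_pow_right₀ (le_max_left _ _) (by omega)
  set c2 : ℝ := c * Real.log B ^ β * CJ with hc2def
  have hlog0 : (0 : ℝ) ≤ Real.log B := Real.log_nonneg (le_of_lt hB1)
  have hc2 : 0 ≤ c2 := by
    apply mul_nonneg (mul_nonneg hc (Real.rpow_nonneg hlog0 _)) hCJ0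
  -- per-interval Hölder bound
  have hdiff : ∀ (Cm X Y : Matrix (Fin d) (Fin ν) ℂ) (Jp : Matrix (Fin ν) (Fin ν) ℂ),
      (Cm + Y * Jp) - (Cm + X * Jp) = (Y - X) * Jp := by
    intro Cm X Y Jp
    rw [Matrix.sub_mul]; abel
  have hint : ∀ n : ℕ, n ≤ N → ∀ x ∈ Set.Icc (n : ℝ) ((n : ℝ) + 1),
      ∀ y ∈ Set.Icc (n : ℝ) ((n : ℝ) + 1),
      ‖𝔸 y - 𝔸 x‖ ≤ c2 * |y - x| ^ β := by
    intro n hn x hx y hy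
    rw [hagree n x hx.1 hx.2, hagree n y hy.1 hy.2, hdiff]
    set bx := (B : ℝ) ^ (x - (n : ℝ) - 1) with hbx
    set by' := (B : ℝ) ^ (y - (n : ℝ) - 1) with hby
    have hbxm : bx ∈ Set.Icc (0 : ℝ) 1 :=
      ⟨le_of_lt (Real.rpow_pos_of_pos hB0 _),
       Real.rpow_le_one_of_one_le_of_nonpos (le_of_lt hB1) (by linarith [hx.2])⟩
    have hbym : by' ∈ Set.Icc (0 : ℝ) 1 :=
      ⟨le_of_lt (Real.rpow_pos_of_pos hB0 _),
       Real.rpow_le_one_of_one_le_of_nonpos (le_of_lt hB1) (by linarith [hy.2])⟩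
    have hlip : |by' - bx| ≤ Real.log B * |y - x| := by
      have := myRpowLip (le_of_lt hB1) (s := x - (n : ℝ) - 1) (t := y - (n : ℝ) - 1)
        (by linarith [hx.2]) (by linarith [hy.2])
      have he : y - (n : ℝ) - 1 - (x - (n : ℝ) - 1) = y - x := by ring
      rwa [he] at this
    calc ‖(F by' - F bx) * J ^ (n + 1)‖
        ≤ ‖F by' - F bx‖ * ‖J ^ (n + 1)‖ := Matrix.linfty_opNorm_mul _ _
    _ ≤ (c * |by' - bx| ^ β) * CJ := by
        apply mul_le_mul (hH bx hbxm by' hbym) (hJn n hn) (norm_nonneg _)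
        exact mul_nonneg hc (Real.rpow_nonneg (abs_nonneg _) _)
    _ ≤ (c * (Real.log B * |y - x|) ^ β) * CJ := by
        apply mul_le_mul_of_nonneg_right _ hCJ0
        apply mul_le_mul_of_nonneg_left _ hc
        exact Real.rpow_le_rpow (abs_nonneg _) hlip (le_of_lt hβ0)
    _ = c2 * |y - x| ^ β := by
        rw [Real.mul_rpow hlog0 (abs_nonneg _), hc2def]; ring
  -- global bound on [0, M]
  obtain ⟨K, hK⟩ := (isCompact_Icc : IsCompact (Set.Icc (0 : ℝ) M)).exists_bound_of_continuousOn
    (contIci.mono fun x hx => hx.1)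
  set K' : ℝ := max K 0 with hK'
  have hK'0 : 0 ≤ K' := le_max_right _ _
  refine ⟨2 * c2 + 2 * K', by positivity, ?_⟩
  have main : ∀ x ∈ Set.Icc (0 : ℝ) M, ∀ y ∈ Set.Icc (0 : ℝ) M, x ≤ y →
      ‖𝔸 y - 𝔸 x‖ ≤ (2 * c2 + 2 * K') * |y - x| ^ β := by
    intro x hx y hy hxy
    have hrpnn : (0 : ℝ) ≤ |y - x| ^ β := Real.rpow_nonneg (abs_nonneg _) _
    rcases le_or_gt 1 (y - x) with hbig | hsmall
    · have h1 : ‖𝔸 y - 𝔸 x‖ ≤ 2 * K' := by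
        calc ‖𝔸 y - 𝔸 x‖ ≤ ‖𝔸 y‖ + ‖𝔸 x‖ := norm_sub_le _ _
        _ ≤ K' + K' := add_le_add (le_trans (hK y hy) (le_max_left _ _))
            (le_trans (hK x hx) (le_max_left _ _))
        _ = 2 * K' := by ring
      have h2 : (1 : ℝ) ≤ |y - x| ^ β := by
        have : (1 : ℝ) = (1 : ℝ) ^ β := (Real.one_rpow β).symm
        rw [this]
        apply Real.rpow_le_rpow zero_le_one _ (le_of_lt hβ0)
        rw [abs_of_nonneg (by linarith)]; exact hbig
      calc ‖𝔸 y - 𝔸 x‖ ≤ 2 * K' := h1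
      _ = 2 * K' * 1 := by ring
      _ ≤ 2 * K' * |y - x| ^ β := by
          apply mul_le_mul_of_nonneg_left h2 (by positivity)
      _ ≤ (2 * c2 + 2 * K') * |y - x| ^ β := by nlinarith
    · set n := ⌊x⌋₊ with hn
      set m := ⌊y⌋₊ with hm
      have hx0 : 0 ≤ x := hx.1
      have hy0 : 0 ≤ y := hy.1
      have hnN : n ≤ N := Nat.floor_le_floor hx.2
      have hmN : m ≤ N := Nat.floor_le_floor hy.2
      have hxf : (n : ℝ) ≤ x := Nat.floor_le hx0
      have hxlt : x < (n : ℝ) + 1 := Nat.lt_floor_add_one x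
      have hyf : (m : ℝ) ≤ y := Nat.floor_le hy0
      have hylt : y < (m : ℝ) + 1 := Nat.lt_floor_add_one y
      have hnm : n ≤ m := Nat.floor_le_floor hxy
      rcases eq_or_lt_of_le hnm with he | hl
      · have hym : y ≤ (n : ℝ) + 1 := by
          have : (n : ℝ) = (m : ℝ) := by exact_mod_cast he
          linarith
        have hyn : (n : ℝ) ≤ y := le_trans hxf hxy
        have := hint n hnN x ⟨hxf, le_of_lt hxlt⟩ y ⟨hyn, hym⟩
        nlinarith
      · have hmn1 : m ≤ n + 1 := by
          have h1 : (m : ℝ) ≤ y := hyf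
          have h2 : (m : ℝ) < (n : ℝ) + 2 := by linarith
          have : (m : ℕ) < n + 2 := by exact_mod_cast (by push_cast; linarith : (m : ℝ) < ((n + 2 : ℕ) : ℝ))
          omega
        have hnm' : (n : ℝ) + 1 ≤ (m : ℝ) := by exact_mod_cast Nat.succ_le_of_lt hl
        have hxm : x ≤ (m : ℝ) := by linarith
        have hym1 : y ≤ (m : ℝ) + 1 := by linarith
        have hmreal : (m : ℝ) ≤ (n : ℝ) + 1 := by exact_mod_cast hmn1
        have h1 := hint n hnN x ⟨hxf, le_of_lt hxlt⟩ (m : ℝ) ⟨by exact_mod_cast hnm, hmreal⟩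
        have h2 := hint m hmN (m : ℝ) ⟨le_refl _, by linarith⟩ y ⟨hyf, hym1⟩
        have htri : 𝔸 y - 𝔸 x = (𝔸 y - 𝔸 (m : ℝ)) + (𝔸 (m : ℝ) - 𝔸 x) := by abel
        have hb1 : |(m : ℝ) - x| ^ β ≤ |y - x| ^ β := by
          apply Real.rpow_le_rpow (abs_nonneg _) _ (le_of_lt hβ0)
          rw [abs_of_nonneg (by linarith), abs_of_nonneg (by linarith)]
          linarith
        have hb2 : |y - (m : ℝ)| ^ β ≤ |y - x| ^ β := by
          apply Real.rpow_le_rpow (abs_nonneg _) _ (le_of_lt hβ0)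
          rw [abs_of_nonneg (by linarith), abs_of_nonneg (by linarith)]
          linarith
        calc ‖𝔸 y - 𝔸 x‖ ≤ ‖𝔸 y - 𝔸 (m : ℝ)‖ + ‖𝔸 (m : ℝ) - 𝔸 x‖ := by
              rw [htri]; exact norm_add_le _ _
        _ ≤ c2 * |y - (m : ℝ)| ^ β + c2 * |(m : ℝ) - x| ^ β := add_le_add h2 h1
        _ ≤ c2 * |y - x| ^ β + c2 * |y - x| ^ β := add_le_add
            (mul_le_mul_of_nonneg_left hb2 hc2) (mul_le_mul_of_nonneg_left hb1 hc2)
        _ ≤ (2 * c2 + 2 * K') * |y - x| ^ β := by nlinarith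
  intro x hx y hy
  rcases le_total x y with h | h
  · exact main x hx y hy h
  · rw [norm_sub_rev, abs_sub_comm]
    exact main y hy x hx h
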